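/- Let A ∈ ℂ^{n×n} Hermitian positive definite, Ψ ∈ ℂ^{n×m} with Ψ ≠ 0, and P > 0. If there exists μ* ≥ 0 such that Tr((A+μ*I)^{−1}ΨΨ^H(A+μ*I)^{−1}) = P, then Y* = (A+μ*I)^{−1}Ψ is the unique global minimizer of Tr(Y^H A Y) − 2Re Tr(Ψ^H Y) subject to Tr(YY^H) = P among stationary points with nonnegative multiplier. -/

import Mathlib

/-!
With `B = A + μ* I`, which is positive definite, `Y* = B⁻¹Ψ` solves `BY* = Ψ`. Completing the
square gives `re tr(YᴴBY) - 2 re tr(ΨᴴY) = re tr((Y - Y*)ᴴB(Y - Y*)) - re tr(Y*ᴴBY*)`, and on the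
constraint set `tr(YYᴴ) = P` the left side differs from the objective only by the constant `μ* P`.
So the objective exceeds its value at `Y*` by `re tr((Y - Y*)ᴴB(Y - Y*))`, which is positive unless
`Y = Y*`.
-/

open Matrix
open scoped ComplexOrder

namespace Matrix

variable {𝕜 : Type*} [RCLike 𝕜] {n m : Type*} [Fintype n] [Fintype m]

lemma PosDef.trace_conjTranspose_mul_mul_same_pos {B : Matrix n n 𝕜} (hB : B.PosDef)
    {D : Matrix n m 𝕜} (hD : D ≠ 0) : 0 < (Dᴴ * B * D).trace := by
  have hpsd := hB.posSemidef.conjTranspose_mul_mul_same D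
  refine hpsd.trace_nonneg.lt_of_ne fun htr => hD ?_
  have hzero : Dᴴ * B * D = 0 := hpsd.trace_eq_zero_iff.mp htr.symm
  refine ext_iff_mulVec.mpr fun x => ?_
  by_contra hx
  have hpos := hB.dotProduct_mulVec_pos (x := D *ᵥ x) (by simpa using hx)
  rw [star_mulVec, dotProduct_mulVec, vecMul_vecMul, ← dotProduct_mulVec] at hpos
  simp [mulVec_mulVec, hzero] at hpos

lemma re_trace_conjTranspose_mul_mul_sub {B : Matrix n n 𝕜} (hB : B.IsHermitian)
    {Y₀ Ψ : Matrix n m 𝕜} (hY₀ : B * Y₀ = Ψ) (Y : Matrix n m 𝕜) :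
    RCLike.re (Yᴴ * B * Y).trace - 2 * RCLike.re (Ψᴴ * Y).trace =
      RCLike.re ((Y - Y₀)ᴴ * B * (Y - Y₀)).trace - RCLike.re (Y₀ᴴ * B * Y₀).trace := by
  have hΨ : Ψᴴ = Y₀ᴴ * B := by rw [← hY₀, conjTranspose_mul, hB.eq]
  have hsymm : RCLike.re (Yᴴ * B * Y₀).trace = RCLike.re (Y₀ᴴ * B * Y).trace := by
    rw [← RCLike.conj_re, ← RCLike.star_def, ← trace_conjTranspose]
    simp [conjTranspose_mul, hB.eq, Matrix.mul_assoc]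
  simp only [hΨ, conjTranspose_sub, Matrix.sub_mul, Matrix.mul_sub, trace_sub, map_sub]
  linarith

lemma trace_conjTranspose_mul_add_smul_one_mul [DecidableEq n] (A : Matrix n n 𝕜) (c : 𝕜)
    (Y : Matrix n m 𝕜) :
    (Yᴴ * (A + c • 1) * Y).trace = (Yᴴ * A * Y).trace + c * (Y * Yᴴ).trace := by
  rw [Matrix.mul_add, Matrix.add_mul, Matrix.mul_smul, Matrix.smul_mul, Matrix.mul_one,
    trace_add, trace_smul, trace_mul_comm Yᴴ Y, smul_eq_mul]

end Matrix

theorem stmt_9_general (n m : ℕ) (A : Matrix (Fin n) (Fin n) ℂ) (hA : A.PosDef)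
    (Ψ : Matrix (Fin n) (Fin m) ℂ)
    (P : ℝ) (μstar : ℝ) (hμ : 0 ≤ μstar)
    (hfeas : (Matrix.trace
        ((A + (μstar : ℂ) • (1 : Matrix (Fin n) (Fin n) ℂ))⁻¹ * Ψ * Ψᴴ *
          (A + (μstar : ℂ) • (1 : Matrix (Fin n) (Fin n) ℂ))⁻¹)).re = P) :
    let f : Matrix (Fin n) (Fin m) ℂ → ℝ := fun Y =>
      (Matrix.trace (Yᴴ * A * Y)).re - 2 * (Matrix.trace (Ψᴴ * Y)).re
    let Ystar : Matrix (Fin n) (Fin m) ℂ :=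
      (A + (μstar : ℂ) • (1 : Matrix (Fin n) (Fin n) ℂ))⁻¹ * Ψ
    (Matrix.trace (Ystar * Ystarᴴ)).re = P ∧
    (A + (μstar : ℂ) • (1 : Matrix (Fin n) (Fin n) ℂ)) * Ystar = Ψ ∧
    ∀ Y : Matrix (Fin n) (Fin m) ℂ,
      (Matrix.trace (Y * Yᴴ)).re = P →
      (∃ μ : ℝ, 0 ≤ μ ∧
        (A + (μ : ℂ) • (1 : Matrix (Fin n) (Fin n) ℂ)) * Y = Ψ) →
      f Ystar ≤ f Y ∧ (f Y = f Ystar → Y = Ystar) := by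
  intro f Ystar
  set B := A + (μstar : ℂ) • (1 : Matrix (Fin n) (Fin n) ℂ)
  have hB : B.PosDef := hA.add_posSemidef (.smul .one (Complex.zero_le_real.mpr hμ))
  have hBY : B * Ystar = Ψ :=
    mul_nonsing_inv_cancel_left B Ψ ((isUnit_iff_isUnit_det B).mp hB.isUnit)
  have hYstar : (Ystar * Ystarᴴ).trace.re = P := by
    show ((B⁻¹ * Ψ) * (B⁻¹ * Ψ)ᴴ).trace.re = P
    rw [← hfeas, conjTranspose_mul, conjTranspose_nonsing_inv, hB.isHermitian.eq,
      ← Matrix.mul_assoc]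
  have hf : ∀ Y, (Y * Yᴴ).trace.re = P →
      f Y = ((Y - Ystar)ᴴ * B * (Y - Ystar)).trace.re - (Ystarᴴ * B * Ystar).trace.re
        - μstar * P := by
    intro Y hY
    have hsquare := re_trace_conjTranspose_mul_mul_sub hB.isHermitian hBY Y
    have hshift := congrArg Complex.re (trace_conjTranspose_mul_add_smul_one_mul A (μstar : ℂ) Y)
    simp only [Complex.add_re, Complex.re_ofReal_mul, hY] at hshift
    simp only [RCLike.re_to_complex] at hsquare
    simp only [f]
    linarith
  refine ⟨hYstar, hBY, fun Y hY _ => ?_⟩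
  have hgap : f Y - f Ystar = ((Y - Ystar)ᴴ * B * (Y - Ystar)).trace.re := by
    rw [hf Y hY, hf Ystar hYstar]
    simp
  have hnonneg := (hB.posSemidef.conjTranspose_mul_mul_same (Y - Ystar)).trace_nonneg
  refine ⟨by linarith [(Complex.nonneg_iff.mp hnonneg).1], ?_⟩
  intro hYeq
  by_contra hne
  have hpos := hB.trace_conjTranspose_mul_mul_same_pos (sub_ne_zero.mpr hne)
  linarith [(Complex.pos_iff.mp hpos).1]

/-- For Hermitian positive definite `A`, `Ψ ≠ 0`, `P > 0`: if `μ* ≥ 0` satisfies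
`Tr((A+μ*I)⁻¹ΨΨᴴ(A+μ*I)⁻¹) = P`, then `Y* = (A+μ*I)⁻¹Ψ` is the unique global
minimizer of `Tr(YᴴAY) − 2Re Tr(ΨᴴY)` subject to `Tr(YYᴴ) = P` among stationary
points (i.e. `Y` with `(A+μI)Y = Ψ` for some multiplier `μ ≥ 0`). -/
theorem stmt_9 (n m : ℕ) (A : Matrix (Fin n) (Fin n) ℂ) (hA : A.PosDef)
    (Ψ : Matrix (Fin n) (Fin m) ℂ) (hΨ : Ψ ≠ 0) (P : ℝ) (hP : 0 < P)
    (μstar : ℝ) (hμ : 0 ≤ μstar)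
    (hfeas : (Matrix.trace
        ((A + (μstar : ℂ) • (1 : Matrix (Fin n) (Fin n) ℂ))⁻¹ * Ψ * Ψᴴ *
          (A + (μstar : ℂ) • (1 : Matrix (Fin n) (Fin n) ℂ))⁻¹)).re = P) :
    let f : Matrix (Fin n) (Fin m) ℂ → ℝ := fun Y =>
      (Matrix.trace (Yᴴ * A * Y)).re - 2 * (Matrix.trace (Ψᴴ * Y)).re
    let Ystar : Matrix (Fin n) (Fin m) ℂ :=
      (A + (μstar : ℂ) • (1 : Matrix (Fin n) (Fin n) ℂ))⁻¹ * Ψ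
    (Matrix.trace (Ystar * Ystarᴴ)).re = P ∧
    (A + (μstar : ℂ) • (1 : Matrix (Fin n) (Fin n) ℂ)) * Ystar = Ψ ∧
    ∀ Y : Matrix (Fin n) (Fin m) ℂ,
      (Matrix.trace (Y * Yᴴ)).re = P →
      (∃ μ : ℝ, 0 ≤ μ ∧
        (A + (μ : ℂ) • (1 : Matrix (Fin n) (Fin n) ℂ)) * Y = Ψ) →
      f Ystar ≤ f Y ∧ (f Y = f Ystar → Y = Ystar) :=
  stmt_9_general n m A hA Ψ P μstar hμ hfeas
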